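/- arXiv:1806.05036 — 7 statements merged into one kernel-verified Lean document; each statement's English description precedes it below -/
import Mathlib

section
/- A binary relation R on a set X is quasi-transitive if and only if there exist binary relations I and P on X such that I and P are disjoint (no pair is related by both), R is their union (xRy iff xIy or xPy), I is symmetric, and P is transitive. -/
/-- A relation is quasi-transitive iff it is the disjoint union of a symmetric
relation and a transitive relation. -/
theorem quasiTransitive_iff_disjoint_union_symmetric_transitive
    {X : Type*} (R : X → X → Prop) :
    (∀ x y z : X, R x y → ¬ R y x → R y z → ¬ R z y → R x z ∧ ¬ R z x) ↔
      ∃ I P : X → X → Prop,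
        (∀ x y : X, ¬ (I x y ∧ P x y)) ∧
        (∀ x y : X, R x y ↔ I x y ∨ P x y) ∧
        (∀ x y : X, I x y → I y x) ∧
        (∀ x y z : X, P x y → P y z → P x z) := by
  constructor
  · intro h
    refine ⟨fun x y => R x y ∧ R y x, fun x y => R x y ∧ ¬ R y x, ?_, ?_, ?_, ?_⟩
    · rintro x y ⟨⟨_, hyx⟩, ⟨_, hnyx⟩⟩; exact hnyx hyx
    · intro x y
      constructor
      · intro hxy; by_cases hyx : R y x
        · exact Or.inl ⟨hxy, hyx⟩
        · exact Or.inr ⟨hxy, hyx⟩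
      · rintro (⟨h1, _⟩ | ⟨h1, _⟩) <;> exact h1
    · rintro x y ⟨h1, h2⟩; exact ⟨h2, h1⟩
    · rintro x y z ⟨hxy, hnyx⟩ ⟨hyz, hnzy⟩
      exact h x y z hxy hnyx hyz hnzy
  · rintro ⟨I, P, hdisj, hunion, hsymm, htrans⟩ x y z hxy hnyx hyz hnzy
    have hPxy : P x y := by
      rcases (hunion x y).1 hxy with hI | hP
      · exact absurd ((hunion y x).2 (Or.inl (hsymm x y hI))) hnyx
      · exact hP
    have hPyz : P y z := by
      rcases (hunion y z).1 hyz with hI | hP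
      · exact absurd ((hunion z y).2 (Or.inl (hsymm y z hI))) hnzy
      · exact hP
    have hPxz : P x z := htrans x y z hPxy hPyz
    refine ⟨(hunion x z).2 (Or.inr hPxz), ?_⟩
    intro hzx
    rcases (hunion z x).1 hzx with hI | hP
    · exact hdisj x z ⟨hsymm z x hI, hPxz⟩
    · exact hnzy ((hunion z y).2 (Or.inr (htrans z x y hP hPxy)))
end

section
/- Every binary relation that is quasi-transitive, right unique, and left serial is symmetric. -/
/-- A quasi-transitive, right unique, left serial relation is symmetric. -/
theorem quasiTransitive_rightUnique_leftSerial_implies_symmetric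
    {X : Type*} (R : X → X → Prop)
    (hqt : ∀ x y z : X, R x y → ¬ R y x → R y z → ¬ R z y → R x z ∧ ¬ R z x)
    (hru : ∀ x y₁ y₂ : X, R x y₁ → R x y₂ → y₁ = y₂)
    (hls : ∀ y : X, ∃ x : X, R x y) :
    ∀ x y : X, R x y → R y x := by
  intro x y hxy
  by_contra hyx
  obtain ⟨u, hux⟩ := hls x
  have hxu : ¬ R x u := fun h => hyx ((hru x y u hxy h) ▸ hux)
  obtain ⟨huy, -⟩ := hqt u x y hux hxu hxy hyx
  exact hyx ((hru u x y hux huy) ▸ hxy)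
end

section
/- Every binary relation that is semi-connex and right Euclidean is transitive, and so is every semi-connex left Euclidean relation. -/
/-- A semi-connex right Euclidean relation is transitive, and so is a
semi-connex left Euclidean relation. -/
theorem semiConnex_euclidean_implies_transitive
    {X : Type*} :
    (∀ R : X → X → Prop,
      (∀ x y : X, R x y ∨ R y x ∨ x = y) →
      (∀ x y z : X, R x y → R x z → R y z) →
      ∀ x y z : X, R x y → R y z → R x z) ∧
    (∀ R : X → X → Prop,
      (∀ x y : X, R x y ∨ R y x ∨ x = y) →
      (∀ x y z : X, R y x → R z x → R y z) →
      ∀ x y z : X, R x y → R y z → R x z) := by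
  constructor
  · intro R hc he x y z hxy hyz
    rcases hc x z with h | h | h
    · exact h
    · have hxx : R x x := he z x x h h
      have hyx : R y x := he x y x hxy hxx
      exact he y x z hyx hyz
    · subst h
      exact he y x x hyz hyz
  · intro R hc he x y z hxy hyz
    rcases hc x z with h | h | h
    · exact h
    · have hxx : R x x := he y x x hxy hxy
      exact he x x z hxx h
    · subst h
      exact he y x x hxy hxy
end

section
/- If X is a set with at least 3 elements, then no binary relation on X that is semi-connex and right Euclidean is anti-symmetric; likewise no semi-connex left Euclidean relation on X is anti-symmetric. -/
lemma aux_euclid {X : Type*} (a b c : X) (hab : a ≠ b) (hac : a ≠ c) (hbc : b ≠ c)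
    (R : X → X → Prop)
    (hconn : ∀ x y : X, R x y ∨ R y x ∨ x = y)
    (heuc : ∀ x y z : X, R x y → R x z → R y z)
    (hanti : ∀ x y : X, R x y → x ≠ y → ¬ R y x) : False := by
  rcases hconn a b with h1 | h1 | h1
  · rcases hconn a c with h2 | h2 | h2
    · exact hanti b c (heuc a b c h1 h2) hbc (heuc a c b h2 h1)
    · have haa := heuc c a a h2 h2
      exact hanti a b h1 hab (heuc a b a h1 haa)
    · exact hac h2
  · rcases hconn b c with h2 | h2 | h2
    · exact hanti a c (heuc b a c h1 h2) hac (heuc b c a h2 h1)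
    · have hbb := heuc c b b h2 h2
      exact hanti b a h1 (Ne.symm hab) (heuc b a b h1 hbb)
    · exact hbc h2
  · exact hab h1

/-- On a set with at least 3 elements, no semi-connex right Euclidean relation
is anti-symmetric, and neither is any semi-connex left Euclidean relation. -/
theorem semiConnex_euclidean_not_antisymmetric
    {X : Type*} (a b c : X) (hab : a ≠ b) (hac : a ≠ c) (hbc : b ≠ c) :
    (∀ R : X → X → Prop,
      (∀ x y : X, R x y ∨ R y x ∨ x = y) →
      (∀ x y z : X, R x y → R x z → R y z) →
      ¬ (∀ x y : X, R x y → x ≠ y → ¬ R y x)) ∧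
    (∀ R : X → X → Prop,
      (∀ x y : X, R x y ∨ R y x ∨ x = y) →
      (∀ x y z : X, R y x → R z x → R y z) →
      ¬ (∀ x y : X, R x y → x ≠ y → ¬ R y x)) := by
  constructor
  · intro R hc he han
    exact aux_euclid a b c hab hac hbc R hc he han
  · intro R hc he han
    refine aux_euclid a b c hab hac hbc (fun x y => R y x) ?_ ?_ ?_
    · intro x y
      rcases hc x y with h | h | h
      · exact Or.inr (Or.inl h)
      · exact Or.inl h
      · exact Or.inr (Or.inr h)
    · intro x y z hxy hxz
      exact he x z y hxz hxy
    · intro x y hxy hne hyx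
      exact han y x hxy (Ne.symm hne) hyx
end

section
/- Every binary relation that is symmetric and incomparability-transitive is anti-transitive or dense. -/
/-- A symmetric, incomparability-transitive relation is anti-transitive or
dense. -/
theorem symmetric_incompTransitive_implies_antitransitive_or_dense
    {X : Type*} (R : X → X → Prop)
    (hsym : ∀ x y : X, R x y → R y x)
    (hit : ∀ x y z : X, ¬ R x y → ¬ R y x → ¬ R y z → ¬ R z y →
      ¬ R x z ∧ ¬ R z x) :
    (∀ x y z : X, R x y → R y z → ¬ R x z) ∨
    (∀ x z : X, R x z → ∃ y : X, R x y ∧ R y z) := by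
  by_cases hat : ∀ x y z : X, R x y → R y z → ¬ R x z
  · exact Or.inl hat
  · right
    push_neg at hat
    obtain ⟨a, b, c, hab, hbc, hac⟩ := hat
    -- key lemma: if R x z and R x b then there is a midpoint
    have key : ∀ x z : X, R x z → R x b → ∃ y : X, R x y ∧ R y z := by
      intro x z hxz hxb
      by_cases hbz : R b z
      · exact ⟨b, hxb, hbz⟩
      · have hzb : ¬ R z b := fun h => hbz (hsym _ _ h)
        -- a is comparable with z
        have haz : R a z := by
          by_contra haz
          have hza : ¬ R z a := fun h => haz (hsym _ _ h)
          exact (hit a z b haz hza hzb hbz).1 hab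
        by_cases hxa : R x a
        · exact ⟨a, hxa, haz⟩
        · have hax : ¬ R a x := fun h => hxa (hsym _ _ h)
          have hxc : R x c := by
            by_contra hxc
            have hcx : ¬ R c x := fun h => hxc (hsym _ _ h)
            exact (hit a x c hax hxa hxc hcx).1 hac
          have hcz : R c z := by
            by_contra hcz
            have hzc : ¬ R z c := fun h => hcz (hsym _ _ h)
            exact (hit c z b hcz hzc hzb hbz).1 (hsym _ _ hbc)
          exact ⟨c, hxc, hcz⟩
    intro x z hxz
    by_cases hxb : R x b
    · exact key x z hxz hxb
    · by_cases hzb : R z b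
      · obtain ⟨y, hzy, hyx⟩ := key z x (hsym _ _ hxz) hzb
        exact ⟨y, hsym _ _ hyx, hsym _ _ hzy⟩
      · have hbx : ¬ R b x := fun h => hxb (hsym _ _ h)
        have hbz : ¬ R b z := fun h => hzb (hsym _ _ h)
        exact absurd hxz (hit x b z hxb hbx hbz hzb).1
end

section
/- If X is a set with at least 5 elements, then every binary relation on X that is left unique, right unique, and incomparability-transitive is empty. -/
/-- On a set with at least 5 elements, a left unique, right unique,
incomparability-transitive relation is empty. -/
theorem leftUnique_rightUnique_incompTransitive_implies_empty
    {X : Type*} (f : Fin 5 → X) (hf : Function.Injective f)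
    (R : X → X → Prop)
    (hlu : ∀ x₁ x₂ y : X, R x₁ y → R x₂ y → x₁ = x₂)
    (hru : ∀ x y₁ y₂ : X, R x y₁ → R x y₂ → y₁ = y₂)
    (hit : ∀ x y z : X, ¬ R x y → ¬ R y x → ¬ R y z → ¬ R z y →
      ¬ R x z ∧ ¬ R z x) :
    ∀ x y : X, ¬ R x y := by
  classical
  intro a b hab
  -- every element is in one of four categories
  have key : ∀ y : X, y = a ∨ y = b ∨ R y a ∨ R b y := by
    intro y
    by_contra h
    push_neg at h
    obtain ⟨hya, hyb, hRya, hRby⟩ := h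
    have hRay : ¬ R a y := fun h' => hyb (hru a b y hab h').symm
    have hRyb : ¬ R y b := fun h' => hya (hlu y a b h' hab)
    exact (hit a y b hRay hRya hRyb hRby).1 hab
  let t : Fin 5 → Fin 4 := fun i =>
    if f i = a then 0 else if f i = b then 1 else if R (f i) a then 2 else 3
  have ht : Function.Injective t := by
    intro i j hij
    apply hf
    simp only [t] at hij
    split_ifs at hij
    all_goals try exact absurd hij (by decide)
    all_goals try simp_all
    all_goals try exact hlu _ _ _ ‹R (f i) a› ‹R (f j) a›
    have hi : R b (f i) := by
      rcases key (f i) with h | h | h | h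
      exacts [absurd h ‹¬f i = a›, absurd h ‹¬f i = b›, absurd h ‹¬R (f i) a›, h]
    have hj : R b (f j) := by
      rcases key (f j) with h | h | h | h
      exacts [absurd h ‹¬f j = a›, absurd h ‹¬f j = b›, absurd h ‹¬R (f j) a›, h]
    exact hru _ _ _ hi hj
  have := Fintype.card_le_of_injective t ht
  simp at this
end

section
/- If a binary relation R on a set X is nonempty (some pair is related), dense, and asymmetric, then X has at least 7 elements. -/
/-- If a relation on X is nonempty, dense, and asymmetric, then X has at
least 7 elements. -/
theorem nonempty_dense_asymmetric_implies_seven_elements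
    {X : Type*} (R : X → X → Prop)
    (hne : ∃ x y : X, R x y)
    (hd : ∀ x z : X, R x z → ∃ y : X, R x y ∧ R y z)
    (has : ∀ x y : X, R x y → ¬ R y x) :
    ∃ f : Fin 7 → X, Function.Injective f := by
  obtain ⟨a, b, hab⟩ := hne
  obtain ⟨m, ham, hmb⟩ := hd a b hab
  obtain ⟨c, hac, hcm⟩ := hd a m ham
  obtain ⟨d, hmd, hdb⟩ := hd m b hmb
  obtain ⟨e, hme, hed⟩ := hd m d hmd
  obtain ⟨p, hcp, hpm⟩ := hd c m hcm
  -- distinctness from a direct edge (would give a loop)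
  have ne1 : ∀ x y : X, R x y → x ≠ y := by
    intro x y h hxy; subst hxy; exact has x x h h
  -- distinctness from a 2-path (would give a 2-cycle)
  have ne2 : ∀ x w y : X, R x w → R w y → x ≠ y := by
    intro x w y h1 h2 hxy; subst hxy; exact has x w h1 h2
  have h01 : a ≠ b := ne1 a b hab
  have h02 : a ≠ m := ne1 a m ham
  have h03 : a ≠ c := ne1 a c hac
  have h04 : a ≠ d := ne2 a m d ham hmd
  have h05 : a ≠ e := ne2 a m e ham hme
  have h06 : a ≠ p := ne2 a c p hac hcp
  have h12 : b ≠ m := (ne1 m b hmb).symm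
  have h13 : b ≠ c := (ne2 c m b hcm hmb).symm
  have h14 : b ≠ d := (ne1 d b hdb).symm
  have h15 : b ≠ e := (ne2 e d b hed hdb).symm
  have h16 : b ≠ p := (ne2 p m b hpm hmb).symm
  have h23 : m ≠ c := (ne1 c m hcm).symm
  have h24 : m ≠ d := ne1 m d hmd
  have h25 : m ≠ e := ne1 m e hme
  have h26 : m ≠ p := (ne1 p m hpm).symm
  have h34 : c ≠ d := ne2 c m d hcm hmd
  have h35 : c ≠ e := ne2 c m e hcm hme
  have h36 : c ≠ p := ne1 c p hcp
  have h45 : d ≠ e := (ne1 e d hed).symm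
  have h46 : d ≠ p := (ne2 p m d hpm hmd).symm
  have h56 : e ≠ p := (ne2 p m e hpm hme).symm
  have hnd : ([a, b, m, c, d, e, p] : List X).Nodup := by
    simp [List.nodup_cons, h01, h02, h03, h04, h05, h06, h12, h13, h14, h15, h16,
      h23, h24, h25, h26, h34, h35, h36, h45, h46, h56]
  exact ⟨([a, b, m, c, d, e, p] : List X).get, List.nodup_iff_injective_get.mp hnd⟩
end
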